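/- arXiv:1411.0279 — 7 statements merged into one kernel-verified Lean document; each statement's English description precedes it below -/
import Mathlib

section
/- For every instance of the CMLAPP there exists an optimal solution that is gap-free; that is, there exist an assortment S with |S| ≤ c and a position assignment σ : S → {1,…,N} with σ(S) = {1,…,|S|} such that U(S,σ) ≥ U(S',σ') for every assortment S' with |S'| ≤ c and every injective position assignment σ' : S' → {1,…,N}. -/
/-- Expected profit `U(S,σ)` of assortment `S` with position assignment `σ`:
products are `Fin N`, positions are `Fin N`, `θ p` is the visibility of
position `p`, `u i` the utility and `r i` the marginal profit of product `i`. -/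
noncomputable def expProfit {N : ℕ} (u r θ : Fin N → ℝ)
    (S : Finset (Fin N)) (σ : Fin N → Fin N) : ℝ :=
  ∑ i ∈ S, r i * (θ (σ i) * u i / (∑ j ∈ S, θ (σ j) * u j + 1))

/-!
If a solution is not gap-free, some product `i` sits at a position behind a free position `p`.
With `A`, `D` the contributions of the other products, the profit as a function of the weight
`x = θ (σ i) * u i` of `i` is `(A + r i * x) / (D + x)` with `D ≥ 1`, which is monotone on `[0, ∞)`.
Hence one of the two moves, dropping `i` (weight `0`) or moving it to the more visible position
`p`, loses no profit. Both moves strictly decrease the sum of the occupied positions, so repeating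
them turns an optimal solution into a gap-free one that is still optimal.
-/

open Finset Function

lemma div_add_le_max_div {A C D s t : ℝ} (hD : 0 < D) (hs : 0 ≤ s) (hst : s ≤ t) :
    (A + C * s) / (D + s) ≤ max (A / D) ((A + C * t) / (D + t)) := by
  rcases le_total (C * D) A with h | h
  · refine le_max_of_le_left ?_
    rw [div_le_div_iff₀ (by linarith) hD]
    nlinarith [mul_nonneg hs (sub_nonneg.2 h)]
  · refine le_max_of_le_right ?_
    rw [div_le_div_iff₀ (by linarith) (by linarith)]
    nlinarith [mul_nonneg (sub_nonneg.2 hst) (sub_nonneg.2 h)]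

lemma Finset.exists_lt_notMem_of_ne_filter_val_lt_card {N : ℕ} {T : Finset (Fin N)}
    (hT : T ≠ univ.filter (fun p : Fin N => (p : ℕ) < T.card)) :
    ∃ q ∈ T, ∃ p ∉ T, p < q := by
  set F := univ.filter (fun p : Fin N => (p : ℕ) < T.card)
  have hF : F.card = T.card := by
    rw [Fin.card_filter_val_lt]
    exact min_eq_right (by simpa using T.card_le_univ)
  obtain ⟨q, hqT, hqF⟩ := not_subset.1 fun h => hT (eq_of_subset_of_card_le h hF.le)
  obtain ⟨p, hpF, hpT⟩ := not_subset.1 fun h => hT (eq_of_subset_of_card_le h hF.ge).symm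
  simp only [F, mem_filter, mem_univ, true_and, not_lt] at hpF hqF
  exact ⟨q, hqT, p, hpT, Fin.lt_def.2 (hpF.trans_le hqF)⟩

lemma Set.InjOn.update_of_notMem_image {α β : Type*} [DecidableEq α] {f : α → β} {s : Set α}
    (hf : InjOn f s) {a : α} {b : β} (hb : b ∉ f '' s) : InjOn (update f a b) s := by
  intro x hx y hy hxy
  by_cases hxa : x = a <;> by_cases hya : y = a
  · exact hxa.trans hya.symm
  · rw [hxa, update_self, update_of_ne hya] at hxy
    exact absurd ⟨y, hy, hxy.symm⟩ hb
  · rw [hya, update_self, update_of_ne hxa] at hxy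
    exact absurd ⟨x, hx, hxy⟩ hb
  · rw [update_of_ne hxa, update_of_ne hya] at hxy
    exact hf hx hy hxy

section Profit

variable {N : ℕ} (u r θ : Fin N → ℝ)

lemma expProfit_eq_div (S : Finset (Fin N)) (σ : Fin N → Fin N) :
    expProfit u r θ S σ =
      (∑ i ∈ S, r i * (θ (σ i) * u i)) / (∑ i ∈ S, θ (σ i) * u i + 1) := by
  simp only [expProfit, sum_div, mul_div_assoc]

lemma expProfit_update_eq {S : Finset (Fin N)} {i : Fin N} (hi : i ∈ S) (σ : Fin N → Fin N)
    (p : Fin N) :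
    expProfit u r θ S (update σ i p) =
      (∑ j ∈ S.erase i, r j * (θ (σ j) * u j) + r i * (θ p * u i)) /
        (∑ j ∈ S.erase i, θ (σ j) * u j + 1 + θ p * u i) := by
  rw [expProfit_eq_div, ← sum_erase_add _ _ hi, ← sum_erase_add _ _ hi, update_self,
    add_right_comm _ (θ p * u i)]
  have hrest : ∀ j ∈ S.erase i, update σ i p j = σ j := fun j hj =>
    update_of_ne (ne_of_mem_erase hj) _ _
  congr 2
  · exact sum_congr rfl fun j hj => by rw [hrest j hj]
  · congr 1
    exact sum_congr rfl fun j hj => by rw [hrest j hj]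

lemma expProfit_le_max_erase_update (hu : ∀ i, 0 ≤ u i) (hθ0 : ∀ p, 0 ≤ θ p)
    {S : Finset (Fin N)} {i : Fin N} (hi : i ∈ S) (σ : Fin N → Fin N) {p : Fin N}
    (hp : θ (σ i) ≤ θ p) :
    expProfit u r θ S σ ≤
      max (expProfit u r θ (S.erase i) σ) (expProfit u r θ S (update σ i p)) := by
  have hσ := expProfit_update_eq u r θ hi σ (σ i)
  rw [update_eq_self] at hσ
  rw [hσ, expProfit_update_eq u r θ hi, expProfit_eq_div]
  exact div_add_le_max_div
    (add_pos_of_nonneg_of_pos (sum_nonneg fun j _ => mul_nonneg (hθ0 _) (hu j)) one_pos)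
    (mul_nonneg (hθ0 _) (hu i)) (mul_le_mul_of_nonneg_right hp (hu i))

theorem exists_gapFree_le_expProfit (hu : ∀ i, 0 ≤ u i) (hθ0 : ∀ p, 0 ≤ θ p)
    (hθ : Antitone θ) {c : ℕ} (S : Finset (Fin N)) (σ : Fin N → Fin N) (hS : S.card ≤ c)
    (hσ : Set.InjOn σ S) :
    ∃ (S' : Finset (Fin N)) (σ' : Fin N → Fin N), S'.card ≤ c ∧ Set.InjOn σ' S' ∧
      S'.image σ' = univ.filter (fun p : Fin N => (p : ℕ) < S'.card) ∧
      expProfit u r θ S σ ≤ expProfit u r θ S' σ' := by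
  classical
  generalize hΦ : ∑ j ∈ S, (σ j : ℕ) = n
  induction n using Nat.strong_induction_on generalizing S σ with
  | _ n ih =>
    by_cases hgap : S.image σ = univ.filter (fun p : Fin N => (p : ℕ) < S.card)
    · exact ⟨S, σ, hS, hσ, hgap, le_rfl⟩
    rw [← card_image_of_injOn hσ] at hgap
    obtain ⟨_, hq, p, hp, hpq⟩ := exists_lt_notMem_of_ne_filter_val_lt_card hgap
    obtain ⟨i, hi, rfl⟩ := mem_image.1 hq
    rcases le_max_iff.1 (expProfit_le_max_erase_update u r θ hu hθ0 hi σ (hθ hpq.le)) with h | h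
    · obtain ⟨S', σ', hS', hσ', hgap', hle⟩ := ih _
        (hΦ ▸ sum_erase_lt_of_pos hi ((Nat.zero_le _).trans_lt hpq)) (S.erase i) σ
        (card_erase_le.trans hS) (hσ.mono (by simp)) rfl
      exact ⟨S', σ', hS', hσ', hgap', h.trans hle⟩
    · have hΦ' : ∑ j ∈ S, (update σ i p j : ℕ) < n := by
        rw [← hΦ, ← sum_erase_add _ _ hi, ← sum_erase_add _ _ hi, update_self]
        refine add_lt_add_of_le_of_lt (sum_le_sum fun j hj => ?_) hpq
        rw [update_of_ne (ne_of_mem_erase hj)]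
      obtain ⟨S', σ', hS', hσ', hgap', hle⟩ := ih _ hΦ' S (update σ i p) hS
        (hσ.update_of_notMem_image (by simpa using hp)) rfl
      exact ⟨S', σ', hS', hσ', hgap', h.trans hle⟩

end Profit

theorem cmlapp_exists_gapfree_optimal_general (N c : ℕ)
    (u r θ : Fin N → ℝ)
    (hu : ∀ i, 0 < u i) (hθ0 : ∀ i, 0 ≤ θ i)
    (hθ : ∀ i j : Fin N, i ≤ j → θ j ≤ θ i) :
    ∃ (S : Finset (Fin N)) (σ : Fin N → Fin N),
      S.card ≤ c ∧ Set.InjOn σ ↑S ∧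
      S.image σ = Finset.univ.filter (fun p : Fin N => (p : ℕ) < S.card) ∧
      ∀ (S' : Finset (Fin N)) (σ' : Fin N → Fin N),
        S'.card ≤ c → Set.InjOn σ' ↑S' →
        expProfit u r θ S' σ' ≤ expProfit u r θ S σ := by
  classical
  let feasible := univ.filter fun P : Finset (Fin N) × (Fin N → Fin N) =>
    P.1.card ≤ c ∧ Set.InjOn P.2 P.1
  obtain ⟨⟨S, σ⟩, hfeas, hmax⟩ := feasible.exists_max_image (fun P => expProfit u r θ P.1 P.2)
    ⟨(∅, id), by simp [feasible]⟩
  simp only [feasible, mem_filter, mem_univ, true_and] at hfeas hmax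
  obtain ⟨S₀, σ₀, hS₀, hσ₀, hgap₀, hle⟩ :=
    exists_gapFree_le_expProfit u r θ (fun i => (hu i).le) hθ0 hθ S σ hfeas.1 hfeas.2
  exact ⟨S₀, σ₀, hS₀, hσ₀, hgap₀, fun S' σ' hS' hσ' => (hmax (S', σ') ⟨hS', hσ'⟩).trans hle⟩

/-- every CMLAPP instance admits an optimal solution that is
gap-free, i.e. whose position assignment maps `S` bijectively onto the first
`|S|` positions. -/
theorem cmlapp_exists_gapfree_optimal (N c : ℕ) (hc : c ≤ N)
    (u r θ : Fin N → ℝ)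
    (hu : ∀ i, 0 < u i) (hθ0 : ∀ i, 0 ≤ θ i)
    (hθ : ∀ i j : Fin N, i ≤ j → θ j ≤ θ i) :
    ∃ (S : Finset (Fin N)) (σ : Fin N → Fin N),
      S.card ≤ c ∧ Set.InjOn σ ↑S ∧
      S.image σ = Finset.univ.filter (fun p : Fin N => (p : ℕ) < S.card) ∧
      ∀ (S' : Finset (Fin N)) (σ' : Fin N → Fin N),
        S'.card ≤ c → Set.InjOn σ' ↑S' →
        expProfit u r θ S' σ' ≤ expProfit u r θ S σ :=
  cmlapp_exists_gapfree_optimal_general N c u r θ hu hθ0 hθ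
end

section
/- Suppose θ_1 ≥ θ_2 ≥ ⋯ ≥ θ_N > 0 and fix λ ∈ ℝ. For an assortment S define g(S) = max over bijections σ : S → {1,…,|S|} of Σ_{i∈S} θ_{σ(i)} u_i (r_i − λ). If S with |S| < c maximizes g over all assortments of size at most c, then u_i (r_i − λ) ≤ 0 for every product i ∉ S. -/
/-!
If some product `i ∉ S` had `u_i (r_i − λ) > 0`, then since `|S| < c` it could be added
to `S` in the first free position `|S| + 1`, keeping the assignment gap-free; this adds the term
`θ_{|S|+1} u_i (r_i − λ) > 0` to the objective, contradicting the optimality of `S`.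
-/

open Finset Function

namespace Assortment

variable {N : ℕ}

/-- Positions are `0`-indexed: the first `|S|` positions are the `p : Fin N` with `p < |S|`. -/
def IsGapFree (S : Finset (Fin N)) (σ : Fin N → Fin N) : Prop :=
  Set.InjOn σ S ∧ S.image σ = univ.filter (fun p : Fin N => (p : ℕ) < S.card)

lemma IsGapFree.lt_card {S : Finset (Fin N)} {σ : Fin N → Fin N} (h : IsGapFree S σ)
    {j : Fin N} (hj : j ∈ S) : (σ j : ℕ) < S.card := by
  have hmem : σ j ∈ S.image σ := mem_image_of_mem σ hj
  rw [h.2, mem_filter] at hmem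
  exact hmem.2

lemma IsGapFree.insert_update {S : Finset (Fin N)} {σ : Fin N → Fin N} (h : IsGapFree S σ)
    {i : Fin N} (hi : i ∉ S) (hN : S.card < N) :
    IsGapFree (insert i S) (update σ i ⟨S.card, hN⟩) := by
  have heq : Set.EqOn σ (update σ i ⟨S.card, hN⟩) S := fun j hj =>
    (update_of_ne (ne_of_mem_of_not_mem hj hi) _ _).symm
  constructor
  · rw [coe_insert, Set.injOn_insert (by exact_mod_cast hi), update_self, ← heq.image_eq]
    refine ⟨h.1.congr heq, ?_⟩
    rintro ⟨j, hj, hji⟩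
    exact (h.lt_card hj).ne (congrArg Fin.val hji)
  · rw [image_insert, ← image_congr heq, h.2, card_insert_of_notMem hi, update_self]
    ext q
    simp only [mem_insert, mem_filter, mem_univ, true_and, Fin.ext_iff]
    omega

lemma sum_insert_update {ι κ M : Type*} [DecidableEq ι] [AddCommMonoid M] {S : Finset ι} {i : ι}
    (hi : i ∉ S) (σ : ι → κ) (p : κ) (f : κ → ι → M) :
    ∑ j ∈ insert i S, f (update σ i p j) j = f p i + ∑ j ∈ S, f (σ j) j := by
  rw [sum_insert hi, update_self]
  congr 1
  refine sum_congr rfl fun j hj => ?_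
  rw [update_of_ne (ne_of_mem_of_not_mem hj hi)]

end Assortment

theorem maximizer_small_implies_nonpos_general (N c : ℕ) (hc : c ≤ N)
    (u r θ : Fin N → ℝ)
    (hθpos : ∀ i, 0 < θ i)
    (lam : ℝ)
    (S : Finset (Fin N)) (hS : S.card < c)
    (σ : Fin N → Fin N) (hinj : Set.InjOn σ ↑S)
    (himg : S.image σ = Finset.univ.filter (fun p : Fin N => (p : ℕ) < S.card))
    (hopt : ∀ (S' : Finset (Fin N)) (σ' : Fin N → Fin N),
      S'.card ≤ c → Set.InjOn σ' ↑S' →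
      S'.image σ' = Finset.univ.filter (fun p : Fin N => (p : ℕ) < S'.card) →
      ∑ i ∈ S', θ (σ' i) * u i * (r i - lam) ≤
        ∑ i ∈ S, θ (σ i) * u i * (r i - lam)) :
    ∀ i : Fin N, i ∉ S → u i * (r i - lam) ≤ 0 := by
  intro i hi
  have hN : S.card < N := hS.trans_le hc
  set p : Fin N := ⟨S.card, hN⟩
  have hext : Assortment.IsGapFree (insert i S) (update σ i p) :=
    Assortment.IsGapFree.insert_update ⟨hinj, himg⟩ hi hN
  have hle := hopt _ _ ((card_insert_of_notMem hi).trans_le hS) hext.1 hext.2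
  rw [Assortment.sum_insert_update hi σ p fun q j => θ q * u j * (r j - lam)] at hle
  have hterm : θ p * (u i * (r i - lam)) ≤ 0 := by linarith
  exact nonpos_of_mul_nonpos_right hterm (hθpos p)

/-- if `S` with `|S| < c` maximizes
`g(S) = max_{σ : S ↔ {1..|S|}} Σ_{i∈S} θ_{σ(i)} u_i (r_i − λ)` over all
assortments of size at most `c` (with `σ` a gap-free position assignment
witnessing the maximum), then `u_i (r_i − λ) ≤ 0` for every product `i ∉ S`. -/
theorem maximizer_small_implies_nonpos (N c : ℕ) (hc : c ≤ N)
    (u r θ : Fin N → ℝ)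
    (hu : ∀ i, 0 < u i) (hθpos : ∀ i, 0 < θ i)
    (hθ : ∀ i j : Fin N, i ≤ j → θ j ≤ θ i) (lam : ℝ)
    (S : Finset (Fin N)) (hS : S.card < c)
    (σ : Fin N → Fin N) (hinj : Set.InjOn σ ↑S)
    (himg : S.image σ = Finset.univ.filter (fun p : Fin N => (p : ℕ) < S.card))
    (hopt : ∀ (S' : Finset (Fin N)) (σ' : Fin N → Fin N),
      S'.card ≤ c → Set.InjOn σ' ↑S' →
      S'.image σ' = Finset.univ.filter (fun p : Fin N => (p : ℕ) < S'.card) →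
      ∑ i ∈ S', θ (σ' i) * u i * (r i - lam) ≤
        ∑ i ∈ S, θ (σ i) * u i * (r i - lam)) :
    ∀ i : Fin N, i ∉ S → u i * (r i - lam) ≤ 0 :=
  maximizer_small_implies_nonpos_general N c hc u r θ hθpos lam S hS σ hinj himg hopt
end

section
/- Suppose θ_1 ≥ θ_2 ≥ ⋯ ≥ θ_N > 0 and fix λ ∈ ℝ. For an assortment S define g(S) = max over bijections σ : S → {1,…,|S|} of Σ_{i∈S} θ_{σ(i)} u_i (r_i − λ). If S with |S| = c maximizes g over all assortments of size at most c, then u_i (r_i − λ) ≥ u_j (r_j − λ) for every i ∈ S and every j ∉ S. -/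
/-! Exchange argument: swapping `i ∈ S` for `j ∉ S` while keeping `j` in the position of `i` gives
another gap-free assortment of the same size whose value differs from that of `S` by
`θ_{σ(i)} (u_j (r_j − λ) − u_i (r_i − λ))`; optimality of `S` and `θ_{σ(i)} > 0` give the claim. -/

open Finset

namespace Finset

variable {α β : Type*} [DecidableEq α]

theorem image_map_swap_comp_swap [DecidableEq β] (S : Finset α) (i j : α) (σ : α → β) :
    (S.map (Equiv.swap i j).toEmbedding).image (σ ∘ Equiv.swap i j) = S.image σ := by
  rw [map_eq_image, image_image]
  congr 1
  ext k
  simp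

theorem injOn_comp_swap_map {S : Finset α} {σ : α → β} (hσ : Set.InjOn σ S) (i j : α) :
    Set.InjOn (σ ∘ Equiv.swap i j) (S.map (Equiv.swap i j).toEmbedding) := by
  intro a ha b hb hab
  simp only [coe_map, Equiv.coe_toEmbedding, Set.mem_image, mem_coe] at ha hb
  obtain ⟨a, ha, rfl⟩ := ha
  obtain ⟨b, hb, rfl⟩ := hb
  simp only [Function.comp_apply, Equiv.swap_apply_self] at hab
  rw [hσ ha hb hab]

theorem sum_map_swap_mul {R : Type*} [CommRing R] {S : Finset α} {i j : α} (hi : i ∈ S)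
    (hj : j ∉ S) (f w : α → R) :
    ∑ k ∈ S.map (Equiv.swap i j).toEmbedding, f (Equiv.swap i j k) * w k =
      ∑ k ∈ S, f k * w k + f i * (w j - w i) := by
  have hfix : ∀ k ∈ S.erase i, Equiv.swap i j k = k := fun k hk =>
    Equiv.swap_apply_of_ne_of_ne (ne_of_mem_erase hk) (fun h => hj (h ▸ mem_of_mem_erase hk))
  rw [sum_map, ← add_sum_erase S _ hi, ← add_sum_erase S _ hi]
  simp only [Equiv.coe_toEmbedding, Equiv.swap_apply_self, Equiv.swap_apply_left,
    Equiv.swap_apply_right]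
  rw [sum_congr rfl fun k hk => by rw [hfix k hk]]
  ring

end Finset

theorem maximizer_full_implies_dominant_general (N c : ℕ)
    (u r θ : Fin N → ℝ)
    (hθpos : ∀ i, 0 < θ i)
    (lam : ℝ)
    (S : Finset (Fin N)) (hS : S.card = c)
    (σ : Fin N → Fin N) (hinj : Set.InjOn σ ↑S)
    (himg : S.image σ = Finset.univ.filter (fun p : Fin N => (p : ℕ) < S.card))
    (hopt : ∀ (S' : Finset (Fin N)) (σ' : Fin N → Fin N),
      S'.card ≤ c → Set.InjOn σ' ↑S' →
      S'.image σ' = Finset.univ.filter (fun p : Fin N => (p : ℕ) < S'.card) →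
      ∑ i ∈ S', θ (σ' i) * u i * (r i - lam) ≤
        ∑ i ∈ S, θ (σ i) * u i * (r i - lam)) :
    ∀ i ∈ S, ∀ j : Fin N, j ∉ S → u j * (r j - lam) ≤ u i * (r i - lam) := by
  intro i hi j hj
  have hswap := hopt (S.map (Equiv.swap i j).toEmbedding) (σ ∘ Equiv.swap i j)
    (by rw [card_map, hS]) (injOn_comp_swap_map hinj i j)
    (by rw [image_map_swap_comp_swap, card_map, himg])
  simp only [Function.comp_apply, mul_assoc] at hswap
  rw [sum_map_swap_mul hi hj (fun k => θ (σ k)) (fun k => u k * (r k - lam))] at hswap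
  exact le_of_mul_le_mul_left (by linarith) (hθpos (σ i))

/-- if `S` with `|S| = c` maximizes
`g(S) = max_{σ : S ↔ {1..|S|}} Σ_{i∈S} θ_{σ(i)} u_i (r_i − λ)` over all
assortments of size at most `c` (with `σ` a gap-free position assignment
witnessing the maximum), then `u_i (r_i − λ) ≥ u_j (r_j − λ)` for every
`i ∈ S` and every `j ∉ S`. -/
theorem maximizer_full_implies_dominant (N c : ℕ) (hc : c ≤ N)
    (u r θ : Fin N → ℝ)
    (hu : ∀ i, 0 < u i) (hθpos : ∀ i, 0 < θ i)
    (hθ : ∀ i j : Fin N, i ≤ j → θ j ≤ θ i) (lam : ℝ)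
    (S : Finset (Fin N)) (hS : S.card = c)
    (σ : Fin N → Fin N) (hinj : Set.InjOn σ ↑S)
    (himg : S.image σ = Finset.univ.filter (fun p : Fin N => (p : ℕ) < S.card))
    (hopt : ∀ (S' : Finset (Fin N)) (σ' : Fin N → Fin N),
      S'.card ≤ c → Set.InjOn σ' ↑S' →
      S'.image σ' = Finset.univ.filter (fun p : Fin N => (p : ℕ) < S'.card) →
      ∑ i ∈ S', θ (σ' i) * u i * (r i - lam) ≤
        ∑ i ∈ S, θ (σ i) * u i * (r i - lam)) :
    ∀ i ∈ S, ∀ j : Fin N, j ∉ S → u j * (r j - lam) ≤ u i * (r i - lam) :=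
  maximizer_full_implies_dominant_general N c u r θ hθpos lam S hS σ hinj himg hopt
end

section
/- Suppose θ_1 ≥ θ_2 ≥ ⋯ ≥ θ_N > 0 and fix λ ∈ ℝ. For an assortment S define g(S) = max over bijections σ : S → {1,…,|S|} of Σ_{i∈S} θ_{σ(i)} u_i (r_i − λ). If S with |S| ≤ c maximizes g over all assortments of size at most c, then S also maximizes Σ_{i∈S'} u_i (r_i − λ) over all assortments S' with |S'| ≤ c. (That is, every assortment in B(λ) belongs to A(λ): 𝓑 ⊆ 𝓐.) -/
/-!
Write `w i = u i * (r i - λ)`. Three moves turn a gap-free assignment into another one: replacing an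
item of `S` by an outside item in the same position, dropping an item (the last item taking over
its position), and appending an outside item in the first free position. Since the visibilities
are positive and decreasing, optimality of `S` against these moves gives: every item of `S` has
nonnegative weight, no outside item weighs more than an item of `S`, and, when `|S| < c`, every
outside item has nonpositive weight. These three facts make `S` a maximizer of `∑_{S'} w` under
`|S'| ≤ c`.
-/

open Finset Function

theorem Set.injOn_insert_update {α β : Type*} [DecidableEq α] {f : α → β} {s : Set α} {a : α}
    {b : β} (ha : a ∉ s) :
    Set.InjOn (update f a b) (insert a s) ↔ Set.InjOn f s ∧ b ∉ f '' s := by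
  have heq : Set.EqOn (update f a b) f s := fun x hx =>
    update_of_ne (ne_of_mem_of_not_mem hx ha) _ _
  rw [Set.injOn_insert ha, update_self, heq.injOn_iff, heq.image_eq]

def IsGapFree {α : Type*} {n : ℕ} (S : Finset α) (σ : α → Fin n) : Prop :=
  Set.InjOn σ S ∧ ∀ i ∈ S, (σ i : ℕ) < #S

namespace IsGapFree

variable {α : Type*} {n : ℕ} {S : Finset α} {σ : α → Fin n}

theorem card_le (h : IsGapFree S σ) : #S ≤ n := by
  simpa using Finset.card_le_card_of_injOn σ (fun _ _ => Finset.mem_coe.2 (mem_univ _)) h.1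

theorem image_eq (h : IsGapFree S σ) :
    S.image σ = univ.filter (fun p : Fin n => (p : ℕ) < #S) := by
  refine eq_of_subset_of_card_le (fun p hp => ?_) ?_
  · obtain ⟨i, hi, rfl⟩ := mem_image.1 hp
    simpa using h.2 i hi
  · rw [card_image_of_injOn h.1, Fin.card_filter_val_lt, min_eq_right h.card_le]

theorem of_image_eq (hinj : Set.InjOn σ S)
    (himg : S.image σ = univ.filter (fun p : Fin n => (p : ℕ) < #S)) : IsGapFree S σ :=
  ⟨hinj, fun i hi => by simpa [himg] using mem_image_of_mem σ hi⟩

theorem exists_eq (h : IsGapFree S σ) {p : Fin n} (hp : (p : ℕ) < #S) : ∃ i ∈ S, σ i = p := by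
  have hmem : p ∈ S.image σ := by simpa [h.image_eq] using hp
  simpa using hmem

variable [DecidableEq α]

theorem erase_of_last (h : IsGapFree S σ) {j : α} (hj : j ∈ S) (hlast : (σ j : ℕ) + 1 = #S) :
    IsGapFree (S.erase j) σ := by
  refine ⟨h.1.mono (by simp), fun a ha => ?_⟩
  obtain ⟨haj, haS⟩ := mem_erase.1 ha
  have hne : σ a ≠ σ j := fun hσ => haj (h.1 haS hj hσ)
  have := h.2 a haS
  rw [card_erase_of_mem hj]
  omega

theorem insert_update (hinj : Set.InjOn σ S) (hσ : ∀ a ∈ S, (σ a : ℕ) ≤ #S) {k : α} (hk : k ∉ S)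
    {p : Fin n} (hp : p ∉ σ '' S) (hpS : (p : ℕ) ≤ #S) :
    IsGapFree (insert k S) (update σ k p) := by
  refine ⟨?_, ?_⟩
  · rw [coe_insert, Set.injOn_insert_update (by simpa using hk)]
    exact ⟨hinj, hp⟩
  · rw [card_insert_of_notMem hk, forall_mem_insert, update_self]
    refine ⟨by omega, fun a ha => ?_⟩
    rw [update_of_ne (ne_of_mem_of_not_mem ha hk)]
    have := hσ a ha
    omega

theorem replace (h : IsGapFree S σ) {i k : α} (hi : i ∈ S) (hk : k ∉ S) :
    IsGapFree (insert k (S.erase i)) (update σ k (σ i)) := by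
  have hcard : #(S.erase i) + 1 = #S := card_erase_add_one hi
  refine insert_update (h.1.mono (by simp)) (fun a ha => ?_) (fun hS => hk (mem_of_mem_erase hS))
    ?_ (by have := h.2 i hi; omega)
  · have := h.2 a (mem_of_mem_erase ha)
    omega
  · rintro ⟨a, ha, hσa⟩
    exact (mem_erase.1 ha).1 (h.1 (mem_of_mem_erase ha) hi hσa)

theorem insert_last (h : IsGapFree S σ) {k : α} (hk : k ∉ S) (hn : #S < n) :
    IsGapFree (insert k S) (update σ k ⟨#S, hn⟩) :=
  insert_update h.1 (fun a ha => (h.2 a ha).le) hk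
    (by rintro ⟨a, ha, hσa⟩; exact (h.2 a ha).ne (congrArg Fin.val hσa)) le_rfl

end IsGapFree

theorem Finset.sum_le_sum_of_card_le_of_forall_le {ι M : Type*} [AddCommMonoid M] [LinearOrder M]
    [IsOrderedAddMonoid M] {s t : Finset ι} {f : ι → M} (hcard : #s ≤ #t)
    (hle : ∀ a ∈ s, ∀ b ∈ t, f a ≤ f b) (hnonneg : ∀ b ∈ t, 0 ≤ f b) :
    ∑ a ∈ s, f a ≤ ∑ b ∈ t, f b := by
  rcases t.eq_empty_or_nonempty with rfl | ht
  · simp [card_eq_zero.1 (Nat.le_zero.1 hcard)]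
  obtain ⟨b₀, hb₀, hmin⟩ := t.exists_min_image f ht
  calc ∑ a ∈ s, f a ≤ #s • f b₀ := sum_le_card_nsmul _ _ _ fun a ha => hle a ha b₀ hb₀
    _ ≤ #t • f b₀ := nsmul_le_nsmul_left (hnonneg b₀ hb₀) hcard
    _ ≤ ∑ b ∈ t, f b := card_nsmul_le_sum _ _ _ hmin

theorem Finset.sum_le_sum_of_exchange {ι : Type*} [DecidableEq ι] {s t : Finset ι} {c : ℕ}
    {w : ι → ℝ} (hs : #s ≤ c) (hnonneg : ∀ i ∈ t, 0 ≤ w i) (hle : ∀ k ∉ t, ∀ i ∈ t, w k ≤ w i)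
    (hnonpos : #t < c → ∀ k ∉ t, w k ≤ 0) :
    ∑ i ∈ s, w i ≤ ∑ i ∈ t, w i := by
  rw [← sum_inter_add_sum_sdiff s t, ← sum_inter_add_sum_sdiff t s, inter_comm]
  refine add_le_add le_rfl ?_
  by_cases hst : #s ≤ #t
  · exact sum_le_sum_of_card_le_of_forall_le (card_sdiff_le_card_sdiff_iff.2 hst)
      (fun a ha b hb => hle a (mem_sdiff.1 ha).2 b (mem_sdiff.1 hb).1)
      (fun b hb => hnonneg b (mem_sdiff.1 hb).1)
  · calc ∑ i ∈ s \ t, w i ≤ 0 :=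
          sum_nonpos fun k hk => hnonpos (by omega) k (mem_sdiff.1 hk).2
      _ ≤ ∑ i ∈ t \ s, w i := sum_nonneg fun i hi => hnonneg i (mem_sdiff.1 hi).1

section PositionalOptimum

variable {α : Type*} [DecidableEq α] {n c : ℕ} {θ : Fin n → ℝ} {w : α → ℝ} {S : Finset α}
  {σ : α → Fin n}

theorem sum_insert_update_mul {T : Finset α} {k : α} (hk : k ∉ T) (p : Fin n) :
    ∑ a ∈ insert k T, θ (update σ k p a) * w a = θ p * w k + ∑ a ∈ T, θ (σ a) * w a := by
  rw [sum_insert hk, update_self]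
  congr 1
  exact sum_congr rfl fun a ha => by rw [update_of_ne (ne_of_mem_of_not_mem ha hk)]

def IsPositionalOptimum (θ : Fin n → ℝ) (w : α → ℝ) (c : ℕ) (S : Finset α) (σ : α → Fin n) :
    Prop :=
  ∀ (S' : Finset α) (σ' : α → Fin n), #S' ≤ c → IsGapFree S' σ' →
    ∑ i ∈ S', θ (σ' i) * w i ≤ ∑ i ∈ S, θ (σ i) * w i

namespace IsPositionalOptimum

theorem weight_le (hopt : IsPositionalOptimum θ w c S σ) (hσ : IsGapFree S σ) (hS : #S ≤ c)
    {i k : α} (hi : i ∈ S) (hk : k ∉ S) (hθ : 0 < θ (σ i)) : w k ≤ w i := by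
  have hk' : k ∉ S.erase i := fun h => hk (mem_of_mem_erase h)
  have hcard : #(insert k (S.erase i)) = #S := by
    rw [card_insert_of_notMem hk', card_erase_add_one hi]
  have h := hopt _ _ (hcard ▸ hS) (hσ.replace hi hk)
  rw [sum_insert_update_mul hk', ← add_sum_erase S _ hi] at h
  exact le_of_mul_le_mul_left (by linarith) hθ

theorem weight_nonpos (hopt : IsPositionalOptimum θ w c S σ) (hσ : IsGapFree S σ) (hS : #S < c)
    {k : α} (hk : k ∉ S) (hn : #S < n) (hθ : 0 < θ ⟨#S, hn⟩) : w k ≤ 0 := by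
  have h := hopt _ _ (by rw [card_insert_of_notMem hk]; omega) (hσ.insert_last hk hn)
  rw [sum_insert_update_mul hk] at h
  exact nonpos_of_mul_nonpos_right (by linarith) hθ

theorem weight_nonneg_of_last (hopt : IsPositionalOptimum θ w c S σ) (hσ : IsGapFree S σ)
    (hS : #S ≤ c) {j : α} (hj : j ∈ S) (hlast : (σ j : ℕ) + 1 = #S) (hθ : 0 < θ (σ j)) :
    0 ≤ w j := by
  have h := hopt _ _ (card_erase_le.trans hS) (hσ.erase_of_last hj hlast)
  rw [← add_sum_erase S _ hj] at h
  exact nonneg_of_mul_nonneg_right (by linarith) hθ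

/-- Drop `i` and move the last item `j` into its position: since `θ (σ j) ≤ θ (σ i)` and
`0 ≤ w j`, optimality forces `0 ≤ θ (σ i) * w i`. -/
theorem weight_nonneg (hopt : IsPositionalOptimum θ w c S σ) (hσ : IsGapFree S σ) (hS : #S ≤ c)
    (hθpos : ∀ p, 0 < θ p) (hθ : Antitone θ) {i : α} (hi : i ∈ S) : 0 ≤ w i := by
  have hpos : 0 < #S := card_pos.2 ⟨i, hi⟩
  obtain ⟨j, hj, hσj⟩ := hσ.exists_eq (p := ⟨#S - 1, by have := hσ.card_le; omega⟩)
    (Nat.sub_lt hpos one_pos)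
  have hlast : (σ j : ℕ) + 1 = #S := by rw [hσj]; exact Nat.sub_add_cancel hpos
  have hj0 := hopt.weight_nonneg_of_last hσ hS hj hlast (hθpos _)
  by_cases hij : i = j
  · exact hij ▸ hj0
  have hi' : i ∈ S.erase j := mem_erase.2 ⟨hij, hi⟩
  have hj' : j ∉ (S.erase j).erase i := fun h => notMem_erase j S (mem_of_mem_erase h)
  have hcard : #(insert j ((S.erase j).erase i)) ≤ c := by
    rw [card_insert_of_notMem hj', card_erase_add_one hi']
    exact card_erase_le.trans hS
  have h := hopt _ _ hcard ((hσ.erase_of_last hj hlast).replace hi' (notMem_erase j S))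
  rw [sum_insert_update_mul hj', ← add_sum_erase S _ hj, ← add_sum_erase (S.erase j) _ hi'] at h
  have hθij : θ (σ j) ≤ θ (σ i) := hθ (Fin.le_def.2 (by have := hσ.2 i hi; omega))
  have : 0 ≤ θ (σ i) * w i := by nlinarith [mul_le_mul_of_nonneg_right hθij hj0]
  exact nonneg_of_mul_nonneg_right this (hθpos _)

end IsPositionalOptimum

end PositionalOptimum

theorem B_subset_A_general (N c : ℕ)
    (u r θ : Fin N → ℝ)
    (hθpos : ∀ i, 0 < θ i)
    (hθ : ∀ i j : Fin N, i ≤ j → θ j ≤ θ i) (lam : ℝ)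
    (S : Finset (Fin N)) (hS : S.card ≤ c)
    (σ : Fin N → Fin N) (hinj : Set.InjOn σ ↑S)
    (himg : S.image σ = Finset.univ.filter (fun p : Fin N => (p : ℕ) < S.card))
    (hopt : ∀ (S' : Finset (Fin N)) (σ' : Fin N → Fin N),
      S'.card ≤ c → Set.InjOn σ' ↑S' →
      S'.image σ' = Finset.univ.filter (fun p : Fin N => (p : ℕ) < S'.card) →
      ∑ i ∈ S', θ (σ' i) * u i * (r i - lam) ≤
        ∑ i ∈ S, θ (σ i) * u i * (r i - lam)) :
    ∀ S' : Finset (Fin N), S'.card ≤ c →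
      ∑ i ∈ S', u i * (r i - lam) ≤ ∑ i ∈ S, u i * (r i - lam) := by
  intro S' hS'
  have hσ : IsGapFree S σ := .of_image_eq hinj himg
  have hopt' : IsPositionalOptimum θ (fun i => u i * (r i - lam)) c S σ :=
    fun S' σ' hS' hσ' => by simpa only [mul_assoc] using hopt S' σ' hS' hσ'.1 hσ'.image_eq
  refine sum_le_sum_of_exchange hS'
    (fun i hi => hopt'.weight_nonneg hσ hS hθpos (fun i j h => hθ i j h) hi)
    (fun k hk i hi => hopt'.weight_le hσ hS hi hk (hθpos _))
    (fun hSc k hk => hopt'.weight_nonpos hσ hSc hk ?_ (hθpos _))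
  simpa using card_lt_univ_of_notMem hk

/-- `𝓑 ⊆ 𝓐`: if `S` with `|S| ≤ c` maximizes
`g(S) = max_{σ : S ↔ {1..|S|}} Σ_{i∈S} θ_{σ(i)} u_i (r_i − λ)` over all
assortments of size at most `c` (with `σ` a gap-free position assignment
witnessing the maximum), then `S` also maximizes `Σ_{i∈S'} u_i (r_i − λ)`
over all assortments `S'` with `|S'| ≤ c`. -/
theorem B_subset_A (N c : ℕ) (hc : c ≤ N)
    (u r θ : Fin N → ℝ)
    (hu : ∀ i, 0 < u i) (hθpos : ∀ i, 0 < θ i)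
    (hθ : ∀ i j : Fin N, i ≤ j → θ j ≤ θ i) (lam : ℝ)
    (S : Finset (Fin N)) (hS : S.card ≤ c)
    (σ : Fin N → Fin N) (hinj : Set.InjOn σ ↑S)
    (himg : S.image σ = Finset.univ.filter (fun p : Fin N => (p : ℕ) < S.card))
    (hopt : ∀ (S' : Finset (Fin N)) (σ' : Fin N → Fin N),
      S'.card ≤ c → Set.InjOn σ' ↑S' →
      S'.image σ' = Finset.univ.filter (fun p : Fin N => (p : ℕ) < S'.card) →
      ∑ i ∈ S', θ (σ' i) * u i * (r i - lam) ≤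
        ∑ i ∈ S, θ (σ i) * u i * (r i - lam)) :
    ∀ S' : Finset (Fin N), S'.card ≤ c →
      ∑ i ∈ S', u i * (r i - lam) ≤ ∑ i ∈ S, u i * (r i - lam) :=
  B_subset_A_general N c u r θ hθpos hθ lam S hS σ hinj himg hopt
end

section
/- Let Z* be the optimal value of the CMLAPP. Then any pair (S,σ), with S an assortment of size at most c and σ : S → {1,…,N} injective, that maximizes Σ_{i∈S} θ_{σ(i)} u_i (r_i − Z*) over all such pairs satisfies U(S,σ) = Z*, i.e., it is an optimal solution of the CMLAPP. -/
section AdjustedSum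

variable {N : ℕ} (u r θ : Fin N → ℝ) (S : Finset (Fin N)) (σ : Fin N → Fin N) (Z : ℝ)

lemma sum_mul_sub_eq_mul_expProfit_sub (hD : ∑ j ∈ S, θ (σ j) * u j + 1 ≠ 0) :
    ∑ i ∈ S, θ (σ i) * u i * (r i - Z)
      = (∑ j ∈ S, θ (σ j) * u j + 1) * (expProfit u r θ S σ - Z) + Z := by
  have hU : (∑ j ∈ S, θ (σ j) * u j + 1) * expProfit u r θ S σ
      = ∑ i ∈ S, r i * (θ (σ i) * u i) := by
    rw [expProfit, Finset.mul_sum]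
    refine Finset.sum_congr rfl fun i _ => ?_
    field_simp
  have hsum : ∑ i ∈ S, θ (σ i) * u i * (r i - Z)
      = ∑ i ∈ S, r i * (θ (σ i) * u i) - Z * ∑ j ∈ S, θ (σ j) * u j := by
    rw [Finset.mul_sum, ← Finset.sum_sub_distrib]
    exact Finset.sum_congr rfl fun i _ => by ring
  linear_combination hsum - hU

variable {u θ}

lemma expProfit_denom_pos (hu : ∀ i, 0 ≤ u i) (hθ : ∀ i, 0 ≤ θ i) :
    0 < ∑ j ∈ S, θ (σ j) * u j + 1 := by
  have := Finset.sum_nonneg fun j (_ : j ∈ S) => mul_nonneg (hθ (σ j)) (hu j)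
  linarith

lemma sum_mul_sub_le_iff_expProfit_le (hu : ∀ i, 0 ≤ u i) (hθ : ∀ i, 0 ≤ θ i) :
    ∑ i ∈ S, θ (σ i) * u i * (r i - Z) ≤ Z ↔ expProfit u r θ S σ ≤ Z := by
  have hD := expProfit_denom_pos S σ hu hθ
  rw [sum_mul_sub_eq_mul_expProfit_sub u r θ S σ Z hD.ne', add_le_iff_nonpos_left,
    ← mul_zero (_ + 1), mul_le_mul_iff_right₀ hD, sub_nonpos]

lemma sum_mul_sub_eq_iff_expProfit_eq (hu : ∀ i, 0 ≤ u i) (hθ : ∀ i, 0 ≤ θ i) :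
    ∑ i ∈ S, θ (σ i) * u i * (r i - Z) = Z ↔ expProfit u r θ S σ = Z := by
  have hD := expProfit_denom_pos S σ hu hθ
  rw [sum_mul_sub_eq_mul_expProfit_sub u r θ S σ Z hD.ne', add_eq_right,
    mul_eq_zero_iff_left hD.ne', sub_eq_zero]

end AdjustedSum

theorem maximizer_at_Zstar_is_optimal_general (N c : ℕ)
    (u r θ : Fin N → ℝ)
    (hu : ∀ i, 0 < u i) (hθ0 : ∀ i, 0 ≤ θ i)
    (Z : ℝ)
    (hZ : IsGreatest {z : ℝ | ∃ (S : Finset (Fin N)) (σ : Fin N → Fin N),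
      S.card ≤ c ∧ Set.InjOn σ ↑S ∧ z = expProfit u r θ S σ} Z)
    (S : Finset (Fin N)) (σ : Fin N → Fin N)
    (hS : S.card ≤ c) (hσ : Set.InjOn σ ↑S)
    (hmax : ∀ (S' : Finset (Fin N)) (σ' : Fin N → Fin N),
      S'.card ≤ c → Set.InjOn σ' ↑S' →
      ∑ i ∈ S', θ (σ' i) * u i * (r i - Z) ≤ ∑ i ∈ S, θ (σ i) * u i * (r i - Z)) :
    expProfit u r θ S σ = Z := by
  have hu' : ∀ i, 0 ≤ u i := fun i => (hu i).le
  obtain ⟨⟨S₀, σ₀, hS₀, hσ₀, hZ₀⟩, hZ_ub⟩ := hZ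
  have h_le : ∑ i ∈ S, θ (σ i) * u i * (r i - Z) ≤ Z :=
    (sum_mul_sub_le_iff_expProfit_le r S σ Z hu' hθ0).2 (hZ_ub ⟨S, σ, hS, hσ, rfl⟩)
  have h_opt : ∑ i ∈ S₀, θ (σ₀ i) * u i * (r i - Z) = Z :=
    (sum_mul_sub_eq_iff_expProfit_eq r S₀ σ₀ Z hu' hθ0).2 hZ₀.symm
  have h_ge : Z ≤ ∑ i ∈ S, θ (σ i) * u i * (r i - Z) := h_opt.ge.trans (hmax S₀ σ₀ hS₀ hσ₀)
  exact (sum_mul_sub_eq_iff_expProfit_eq r S σ Z hu' hθ0).1 (le_antisymm h_le h_ge)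

/-- if `Z*` is the optimal CMLAPP value, then any feasible pair
`(S,σ)` maximizing `Σ_{i∈S} θ_{σ(i)} u_i (r_i − Z*)` over all feasible pairs
satisfies `U(S,σ) = Z*`, i.e. it is an optimal CMLAPP solution. -/
theorem maximizer_at_Zstar_is_optimal (N c : ℕ) (hc : c ≤ N)
    (u r θ : Fin N → ℝ)
    (hu : ∀ i, 0 < u i) (hθ0 : ∀ i, 0 ≤ θ i)
    (hθ : ∀ i j : Fin N, i ≤ j → θ j ≤ θ i)
    (Z : ℝ)
    (hZ : IsGreatest {z : ℝ | ∃ (S : Finset (Fin N)) (σ : Fin N → Fin N),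
      S.card ≤ c ∧ Set.InjOn σ ↑S ∧ z = expProfit u r θ S σ} Z)
    (S : Finset (Fin N)) (σ : Fin N → Fin N)
    (hS : S.card ≤ c) (hσ : Set.InjOn σ ↑S)
    (hmax : ∀ (S' : Finset (Fin N)) (σ' : Fin N → Fin N),
      S'.card ≤ c → Set.InjOn σ' ↑S' →
      ∑ i ∈ S', θ (σ' i) * u i * (r i - Z) ≤ ∑ i ∈ S, θ (σ i) * u i * (r i - Z)) :
    expProfit u r θ S σ = Z :=
  maximizer_at_Zstar_is_optimal_general N c u r θ hu hθ0 Z hZ S σ hS hσ hmax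
end

section
/- Suppose θ_1 ≥ θ_2 ≥ ⋯ ≥ θ_N > 0. Then there exists λ ∈ ℝ and an optimal solution (S,σ) of the CMLAPP such that S maximizes Σ_{i∈S'} u_i (r_i − λ) over all assortments S' with |S'| ≤ c; in other words, the CMLAPP admits an optimal assortment lying in the candidate family 𝓐 = {A(λ) : λ ∈ ℝ} of the capacitated multinomial logit assortment problem without position bias. -/
open Finset

theorem Antitone.sum_le_sum_range_card {w : ℕ → ℝ} (hw : Antitone w) (K : Finset ℕ) :
    ∑ k ∈ K, w k ≤ ∑ k ∈ range #K, w k := by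
  induction K using Finset.induction_on_max with
  | empty => simp
  | insert a s hlt ih =>
    have has : a ∉ s := fun h => (hlt a h).false
    have hcard : #s ≤ a := by
      simpa using card_le_card (t := range a) fun x hx => mem_range.2 (hlt x hx)
    rw [sum_insert has, card_insert_of_notMem has, sum_range_succ, add_comm]
    exact add_le_add ih (hw hcard)

theorem Antitone.sum_comp_le_sum_range {ι : Type*} {w : ℕ → ℝ} (hw : Antitone w) (hw0 : 0 ≤ w)
    {s : Finset ι} {q : ι → ℕ} (hq : Set.InjOn q s) {m : ℕ} (hs : #s ≤ m) :
    ∑ i ∈ s, w (q i) ≤ ∑ k ∈ range m, w k := by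
  classical
  rw [← sum_image hq]
  refine (hw.sum_le_sum_range_card _).trans ?_
  refine sum_le_sum_of_subset_of_nonneg ?_ fun k _ _ => hw0 k
  exact range_subset_range.2 ((card_image_of_injOn hq).le.trans hs)

theorem eq_sum_range_ite_sub {Θ : ℕ → ℝ} {N : ℕ} (hΘN : ∀ k, N ≤ k → Θ k = 0) (p : ℕ) :
    Θ p = ∑ k ∈ range N, if p ≤ k then Θ k - Θ (k + 1) else 0 := by
  rw [← sum_filter]
  rcases le_or_gt N p with hNp | hpN
  · rw [hΘN p hNp, eq_comm]
    exact sum_eq_zero fun k hk => by simp at hk; omega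
  · have : (range N).filter (p ≤ ·) = Ico p N := by ext; simp; omega
    rw [this, sum_Ico_eq_sub _ hpN.le, sum_range_sub', sum_range_sub', hΘN N le_rfl]
    ring

theorem sum_mul_eq_sum_range_sub_mul {ι : Type*} {Θ : ℕ → ℝ} {N : ℕ}
    (hΘN : ∀ k, N ≤ k → Θ k = 0) (s : Finset ι) (p : ι → ℕ) (F : ι → ℝ) :
    ∑ i ∈ s, Θ (p i) * F i =
      ∑ k ∈ range N, (Θ k - Θ (k + 1)) * ∑ i ∈ s with p i ≤ k, F i := by
  simp_rw [mul_sum, sum_filter]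
  rw [sum_comm]
  refine sum_congr rfl fun i _ => ?_
  rw [eq_sum_range_ite_sub hΘN (p i), sum_mul]
  exact sum_congr rfl fun k _ => by split_ifs <;> ring

theorem sum_mul_le_sum_range_mul {ι : Type*} {Θ W : ℕ → ℝ} {N : ℕ} (hΘ : Antitone Θ)
    (hΘN : ∀ k, N ≤ k → Θ k = 0) (hW : Antitone W) (hW0 : 0 ≤ W) {s : Finset ι}
    {p q : ι → ℕ} (hp : Set.InjOn p s) (hq : Set.InjOn q s) {m : ℕ} (hs : #s ≤ m) :
    ∑ i ∈ s, Θ (p i) * W (q i) ≤ ∑ k ∈ range m, Θ k * W k := by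
  rw [sum_mul_eq_sum_range_sub_mul hΘN]
  refine le_of_le_of_eq ?_ (sum_mul_eq_sum_range_sub_mul hΘN (range m) id W).symm
  refine sum_le_sum fun k _ => mul_le_mul_of_nonneg_left ?_ (sub_nonneg.2 (hΘ k.le_succ))
  have hfilter : (range m).filter (fun j => id j ≤ k) = range (min (k + 1) m) := by
    ext; simp; omega
  rw [hfilter]
  refine hW.sum_comp_le_sum_range hW0 (hq.mono (filter_subset _ _)) (le_min ?_ ?_)
  · simpa using card_le_card_of_injOn p (t := range (k + 1))
      (fun i hi => by simp at hi ⊢; omega) (hp.mono (filter_subset _ _))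
  · exact (card_filter_le _ _).trans hs

theorem sum_filter_comp_mul_eq_sum_range {ι : Type*} [Fintype ι] {ρ : ι → ℕ}
    (hρ : Function.Injective ρ) {W : ℕ → ℝ} (hWρ : ∀ k, W k ≠ 0 → k ∈ Set.range ρ)
    (Φ : ℕ → ℝ) (c : ℕ) :
    ∑ i with ρ i < c ∧ W (ρ i) ≠ 0, Φ (ρ i) * W (ρ i) = ∑ k ∈ range c, Φ k * W k := by
  classical
  have himage : (univ.filter fun i => ρ i < c ∧ W (ρ i) ≠ 0).image ρ =
      (range c).filter fun k => W k ≠ 0 := by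
    ext k
    simp only [mem_image, mem_filter, mem_univ, true_and, mem_range]
    constructor
    · rintro ⟨i, hi, rfl⟩
      exact hi
    · rintro ⟨hk, hWk⟩
      obtain ⟨i, rfl⟩ := hWρ k hWk
      exact ⟨i, ⟨hk, hWk⟩, rfl⟩
  rw [← sum_image (f := fun k => Φ k * W k) hρ.injOn, himage]
  exact sum_filter_of_ne fun k _ hk => right_ne_zero_of_mul hk

/-- Zero from `N` on, so that Abel summation over `range N` telescopes. -/
def natExtend {N : ℕ} (f : Fin N → ℝ) (k : ℕ) : ℝ :=
  if h : k < N then f ⟨k, h⟩ else 0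

@[simp]
theorem natExtend_val {N : ℕ} (f : Fin N → ℝ) (i : Fin N) : natExtend f i = f i := by
  simp [natExtend]

theorem natExtend_of_le {N : ℕ} (f : Fin N → ℝ) {k : ℕ} (hk : N ≤ k) : natExtend f k = 0 := by
  simp [natExtend, hk.not_gt]

theorem natExtend_nonneg {N : ℕ} {f : Fin N → ℝ} (hf : 0 ≤ f) : 0 ≤ natExtend f := by
  intro k
  unfold natExtend
  split_ifs
  exacts [hf _, le_rfl]

theorem antitone_natExtend {N : ℕ} {f : Fin N → ℝ} (hf : Antitone f) (hf0 : 0 ≤ f) :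
    Antitone (natExtend f) := by
  intro k l hkl
  unfold natExtend
  split_ifs with hl hk hk
  · exact hf (Fin.mk_le_mk.2 hkl)
  · omega
  · exact hf0 _
  · exact le_rfl

theorem exists_assortment_maximizing_weighted_and_unweighted {N : ℕ} (c : ℕ)
    (θ v : Fin N → ℝ) (hθ0 : 0 ≤ θ) (hθ : Antitone θ) :
    ∃ (S : Finset (Fin N)) (σ : Fin N → Fin N), #S ≤ c ∧ Set.InjOn σ S ∧
      (∀ (S' : Finset (Fin N)) (σ' : Fin N → Fin N), #S' ≤ c → Set.InjOn σ' S' →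
        ∑ i ∈ S', θ (σ' i) * v i ≤ ∑ i ∈ S, θ (σ i) * v i) ∧
      ∀ S' : Finset (Fin N), #S' ≤ c → ∑ i ∈ S', v i ≤ ∑ i ∈ S, v i := by
  classical
  obtain ⟨e, he⟩ : ∃ e : Equiv.Perm (Fin N), Antitone (v ∘ e) :=
    ⟨_, monotone_toDual_comp_iff.1 (Tuple.monotone_sort (OrderDual.toDual ∘ v))⟩
  set ρ : Fin N → ℕ := fun i => e.symm i
  have hρ : Function.Injective ρ := Fin.val_injective.comp e.symm.injective
  set W := natExtend fun k => max (v (e k)) 0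
  have hW0 : 0 ≤ W := natExtend_nonneg fun k => le_max_right _ _
  have hW : Antitone W :=
    antitone_natExtend (fun k l hkl => max_le_max_right 0 (he hkl)) fun k => le_max_right _ _
  have hWρ : ∀ i, W (ρ i) = max (v i) 0 := fun i => by simp [W, ρ]
  have hv_le : ∀ i, v i ≤ W (ρ i) := fun i => (hWρ i).symm ▸ le_max_left _ _
  have hW_range : ∀ k, W k ≠ 0 → k ∈ Set.range ρ := by
    intro k hk
    have hkN : k < N := by
      by_contra h
      exact hk (natExtend_of_le _ (not_lt.1 h))
    exact ⟨e ⟨k, hkN⟩, by simp [ρ]⟩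
  set S := univ.filter fun i => ρ i < c ∧ W (ρ i) ≠ 0
  have hgreedy : ∀ Φ : ℕ → ℝ, ∑ i ∈ S, Φ (ρ i) * v i = ∑ k ∈ range c, Φ k * W k := by
    intro Φ
    rw [← sum_filter_comp_mul_eq_sum_range hρ hW_range Φ c]
    refine sum_congr rfl fun i hi => ?_
    have hpos : W (ρ i) ≠ 0 := (mem_filter.1 hi).2.2
    rw [hWρ] at hpos ⊢
    rw [max_eq_left (not_le.1 fun h => hpos (max_eq_right h)).le]
  refine ⟨S, e.symm, ?_, e.symm.injective.injOn, fun S' σ' hS' hσ' => ?_, fun S' hS' => ?_⟩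
  · simpa using card_le_card_of_injOn ρ (t := range c) (fun i hi => by simp_all [S])
      hρ.injOn
  · calc ∑ i ∈ S', θ (σ' i) * v i
        ≤ ∑ i ∈ S', natExtend θ (σ' i) * W (ρ i) :=
          sum_le_sum fun i _ => by
            rw [natExtend_val]
            exact mul_le_mul_of_nonneg_left (hv_le i) (hθ0 _)
      _ ≤ ∑ k ∈ range c, natExtend θ k * W k :=
          sum_mul_le_sum_range_mul (antitone_natExtend hθ hθ0) (fun k => natExtend_of_le θ)
            hW hW0 (Fin.val_injective.comp_injOn hσ') hρ.injOn hS'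
      _ = ∑ i ∈ S, θ (e.symm i) * v i := by
          rw [← hgreedy]
          simp only [ρ, natExtend_val]
  · calc ∑ i ∈ S', v i
        ≤ ∑ i ∈ S', W (ρ i) := sum_le_sum fun i _ => hv_le i
      _ ≤ ∑ k ∈ range c, W k := hW.sum_comp_le_sum_range hW0 hρ.injOn hS'
      _ = ∑ i ∈ S, v i := by simpa using (hgreedy 1).symm

theorem le_expProfit_iff {N : ℕ} {u r θ : Fin N → ℝ} (hu : 0 ≤ u) (hθ : 0 ≤ θ)
    (S : Finset (Fin N)) (σ : Fin N → Fin N) (lam : ℝ) :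
    lam ≤ expProfit u r θ S σ ↔ lam ≤ ∑ i ∈ S, θ (σ i) * (u i * (r i - lam)) := by
  set X := ∑ j ∈ S, θ (σ j) * u j
  have hX : 0 < X + 1 := by
    have : 0 ≤ X := sum_nonneg fun j _ => mul_nonneg (hθ _) (hu _)
    linarith
  have hU : expProfit u r θ S σ = (∑ i ∈ S, r i * (θ (σ i) * u i)) / (X + 1) := by
    rw [expProfit, sum_div]
    exact sum_congr rfl fun i _ => by ring
  have hg : ∑ i ∈ S, θ (σ i) * (u i * (r i - lam)) =
      ∑ i ∈ S, r i * (θ (σ i) * u i) - lam * X := by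
    rw [mul_sum, ← sum_sub_distrib]
    exact sum_congr rfl fun i _ => by ring
  rw [hU, hg, le_div_iff₀ hX]
  constructor <;> intro h <;> linarith

theorem optimal_assortment_in_A_general (N c : ℕ)
    (u r θ : Fin N → ℝ)
    (hu : ∀ i, 0 < u i) (hθpos : ∀ i, 0 < θ i)
    (hθ : ∀ i j : Fin N, i ≤ j → θ j ≤ θ i) :
    ∃ (lam : ℝ) (S : Finset (Fin N)) (σ : Fin N → Fin N),
      S.card ≤ c ∧ Set.InjOn σ ↑S ∧
      (∀ (S' : Finset (Fin N)) (σ' : Fin N → Fin N),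
        S'.card ≤ c → Set.InjOn σ' ↑S' →
        expProfit u r θ S' σ' ≤ expProfit u r θ S σ) ∧
      (∀ S' : Finset (Fin N), S'.card ≤ c →
        ∑ i ∈ S', u i * (r i - lam) ≤ ∑ i ∈ S, u i * (r i - lam)) := by
  classical
  obtain ⟨⟨S₀, σ₀⟩, h₀, hmax⟩ := exists_max_image
    (univ.filter fun p : Finset (Fin N) × (Fin N → Fin N) => #p.1 ≤ c ∧ Set.InjOn p.2 p.1)
    (fun p => expProfit u r θ p.1 p.2) ⟨(∅, id), by simp⟩
  rw [mem_filter] at h₀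
  set lam := expProfit u r θ S₀ σ₀
  have hu0 : 0 ≤ u := fun i => (hu i).le
  have hθ0 : 0 ≤ θ := fun i => (hθpos i).le
  obtain ⟨S, σ, hS, hσ, hweighted, hunweighted⟩ :=
    exists_assortment_maximizing_weighted_and_unweighted c θ (fun i => u i * (r i - lam)) hθ0
      fun i j hij => hθ i j hij
  have hopt : lam ≤ expProfit u r θ S σ :=
    (le_expProfit_iff hu0 hθ0 S σ lam).2 <|
      ((le_expProfit_iff hu0 hθ0 S₀ σ₀ lam).1 le_rfl).trans (hweighted S₀ σ₀ h₀.2.1 h₀.2.2)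
  refine ⟨lam, S, σ, hS, hσ, fun S' σ' hS' hσ' => ?_, hunweighted⟩
  exact (hmax (S', σ') (by simp [hS', hσ'])).trans hopt

/-- the CMLAPP admits an optimal solution whose assortment lies in
the candidate family `𝓐 = {A(λ) : λ ∈ ℝ}` of the capacitated MNL assortment
problem without position bias: there exist `λ ∈ ℝ` and an optimal CMLAPP pair
`(S,σ)` such that `S` maximizes `Σ_{i∈S'} u_i (r_i − λ)` over all assortments
`S'` with `|S'| ≤ c`. -/
theorem optimal_assortment_in_A (N c : ℕ) (hc : c ≤ N)
    (u r θ : Fin N → ℝ)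
    (hu : ∀ i, 0 < u i) (hθpos : ∀ i, 0 < θ i)
    (hθ : ∀ i j : Fin N, i ≤ j → θ j ≤ θ i) :
    ∃ (lam : ℝ) (S : Finset (Fin N)) (σ : Fin N → Fin N),
      S.card ≤ c ∧ Set.InjOn σ ↑S ∧
      (∀ (S' : Finset (Fin N)) (σ' : Fin N → Fin N),
        S'.card ≤ c → Set.InjOn σ' ↑S' →
        expProfit u r θ S' σ' ≤ expProfit u r θ S σ) ∧
      (∀ S' : Finset (Fin N), S'.card ≤ c →
        ∑ i ∈ S', u i * (r i - lam) ≤ ∑ i ∈ S, u i * (r i - lam)) :=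
  optimal_assortment_in_A_general N c u r θ hu hθpos hθ
end

section
/- Let S be a finite index set and for j ∈ S let θ_j ≥ 0, u_j > 0, r_j ∈ ℝ and ε_j ≥ 0. Set Q = Σ_{j∈S} θ_j u_j + 1, R = Σ_{j∈S} θ_j u_j r_j and λ* = R/Q, and suppose r_j ≥ λ* for every j ∈ S. Then Σ_{j∈S} (θ_j u_j / Q) · (R + ε_j θ_j r_j)/(Q + ε_j θ_j) + (1/Q)·λ* ≥ λ*. In words: if the same assortment and position assignment are used at the next step, the expected profit at the next step conditional on the current step is at least the current expected profit. -/
/-!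
Since `Q = ∑ θ_j u_j + 1`, the weights `θ_j u_j / Q` and `1 / Q` sum to one, so the left-hand side
is a convex combination. Each post-purchase profit `(R + ε_j θ_j r_j) / (Q + ε_j θ_j)` is a mediant
of `R / Q = λ*` and `r_j ≥ λ*`, hence at least `λ*`, and so is the whole combination.
-/

section

variable {𝕜 : Type*} [Field 𝕜] [LinearOrder 𝕜] [IsStrictOrderedRing 𝕜]

theorem div_le_add_mul_div_add {a b c x : 𝕜} (hb : 0 < b) (hc : 0 ≤ c) (hx : a / b ≤ x) :
    a / b ≤ (a + c * x) / (b + c) := by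
  rw [div_le_div_iff₀ hb (add_pos_of_pos_of_nonneg hb hc)]
  have hax : a ≤ x * b := (div_le_iff₀ hb).1 hx
  linarith [mul_le_mul_of_nonneg_left hax hc]

theorem Finset.le_sum_mul_add_mul {ι : Type*} {s : Finset ι} {w x : ι → 𝕜} {w₀ m : 𝕜}
    (hw : ∀ i ∈ s, 0 ≤ w i) (hw_sum : ∑ i ∈ s, w i + w₀ = 1) (hx : ∀ i ∈ s, m ≤ x i) :
    m ≤ ∑ i ∈ s, w i * x i + w₀ * m :=
  calc m = ∑ i ∈ s, w i * m + w₀ * m := by rw [← Finset.sum_mul, ← add_mul, hw_sum, one_mul]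
    _ ≤ ∑ i ∈ s, w i * x i + w₀ * m := by
      gcongr with i hi
      · exact hw i hi
      · exact hx i hi

end

theorem social_influence_step_ge_general {ι : Type*} (S : Finset ι)
    (θ u r ε : ι → ℝ)
    (hθ : ∀ j ∈ S, 0 ≤ θ j) (hu : ∀ j ∈ S, 0 < u j) (hε : ∀ j ∈ S, 0 ≤ ε j)
    (Q R lam : ℝ)
    (hQ : Q = ∑ j ∈ S, θ j * u j + 1)
    (hlam : lam = R / Q)
    (hr : ∀ j ∈ S, lam ≤ r j) :
    lam ≤ (∑ j ∈ S, (θ j * u j / Q) * ((R + ε j * θ j * r j) / (Q + ε j * θ j)))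
        + (1 / Q) * lam := by
  have hθu : ∀ j ∈ S, 0 ≤ θ j * u j := fun j hj => mul_nonneg (hθ j hj) (hu j hj).le
  have hQ_pos : 0 < Q := by
    rw [hQ]
    linarith [Finset.sum_nonneg hθu]
  have hweights : ∑ j ∈ S, θ j * u j / Q + 1 / Q = 1 := by
    rw [← Finset.sum_div, ← add_div, ← hQ, div_self hQ_pos.ne']
  refine Finset.le_sum_mul_add_mul (fun j hj => div_nonneg (hθu j hj) hQ_pos.le) hweights
    fun j hj => ?_
  subst hlam
  exact div_le_add_mul_div_add hQ_pos (mul_nonneg (hε j hj) (hθ j hj)) (hr j hj)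

/-- core of Lemma 1: if every displayed product's marginal
profit is at least the current expected profit `λ* = R/Q`, then reusing the
same assortment and position assignment at the next step yields a conditional
expected profit at least `λ*`. -/
theorem social_influence_step_ge {ι : Type*} (S : Finset ι)
    (θ u r ε : ι → ℝ)
    (hθ : ∀ j ∈ S, 0 ≤ θ j) (hu : ∀ j ∈ S, 0 < u j) (hε : ∀ j ∈ S, 0 ≤ ε j)
    (Q R lam : ℝ)
    (hQ : Q = ∑ j ∈ S, θ j * u j + 1)
    (hR : R = ∑ j ∈ S, θ j * u j * r j)
    (hlam : lam = R / Q)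
    (hr : ∀ j ∈ S, lam ≤ r j) :
    lam ≤ (∑ j ∈ S, (θ j * u j / Q) * ((R + ε j * θ j * r j) / (Q + ε j * θ j)))
        + (1 / Q) * lam :=
  social_influence_step_ge_general S θ u r ε hθ hu hε Q R lam hQ hlam hr
end
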